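/- On the loop space M of smooth maps from S¹ to sl(n+1), the two Poisson tensors (P_0)_S V = [A, V] (with A a fixed constant matrix) and (P_1)_S V = V_x + [V, S] are compatible, i.e., (P_λ)_S V = V_x + [V, S + λA] defines a Poisson tensor for every λ. -/

import Mathlib

noncomputable section

/-- loops in `gl(n+1, ℝ)` -/
abbrev Loop (n : ℕ) := ℝ → Matrix (Fin (n + 1)) (Fin (n + 1)) ℝ

/-- the Killing form of `sl(n+1)`: `K(X,Y) = 2(n+1) tr(XY)` -/
def killing (n : ℕ) (X Y : Matrix (Fin (n + 1)) (Fin (n + 1)) ℝ) : ℝ :=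
  (2 * (n + 1) : ℝ) * (X * Y).trace

/-- matrix commutator -/
def mcomm {n : ℕ} (X Y : Matrix (Fin (n + 1)) (Fin (n + 1)) ℝ) :
    Matrix (Fin (n + 1)) (Fin (n + 1)) ℝ := X * Y - Y * X

/-- entrywise `x`-derivative of a loop -/
def lderiv {n : ℕ} (V : Loop n) : Loop n :=
  fun x => Matrix.of fun i j => deriv (fun y => V y i j) x

/-- a smooth, periodic, `sl(n+1)`-valued loop -/
def IsLoop {n : ℕ} (V : Loop n) : Prop :=
  (∀ i j, ContDiff ℝ (⊤ : ℕ∞) fun x => V x i j) ∧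
  (∀ i j, Function.Periodic (fun x => V x i j) 1) ∧
  ∀ x, (V x).trace = 0

/-- The Poisson pencil bracket evaluated on the linear functionals
`ℓ_V(S) = ∫ (V,S)` determined by covectors `V`, `W`:
`{ℓ_V,ℓ_W}_λ(S) = ∫ (S + λA, [V,W]) + σ(V,W)`, where
`σ(V,W) = ∫ (V, dW/dx)` is the cocycle; since the differential of
`S ↦ {ℓ_V,ℓ_W}_λ(S)` is the loop `[V,W]`, iterated brackets of linear
functionals are computed by the same formula. -/
def pencilBracket (n : ℕ) (lam : ℝ) (A : Matrix (Fin (n + 1)) (Fin (n + 1)) ℝ)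
    (S V W : Loop n) : ℝ :=
  (∫ x in (0:ℝ)..1, killing n (S x + lam • A) (mcomm (V x) (W x)))
    + ∫ x in (0:ℝ)..1, killing n (V x) (lderiv W x)

variable {n : ℕ}

def CE (P : Loop n) : Prop := ∀ i j, Continuous fun x => P x i j

lemma CE.mul {P Q : Loop n} (hP : CE P) (hQ : CE Q) : CE fun x => P x * Q x := fun i j => by
  simp only [Matrix.mul_apply]
  exact continuous_finset_sum _ fun k _ => (hP i k).mul (hQ k j)

lemma CE.add {P Q : Loop n} (hP : CE P) (hQ : CE Q) : CE fun x => P x + Q x := fun i j => by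
  simpa [Matrix.add_apply] using (hP i j).fun_add (hQ i j)

lemma CE.sub {P Q : Loop n} (hP : CE P) (hQ : CE Q) : CE fun x => P x - Q x := fun i j => by
  simpa [Matrix.sub_apply] using (hP i j).fun_sub (hQ i j)

lemma CE.const (M : Matrix (Fin (n + 1)) (Fin (n + 1)) ℝ) : CE fun _ : ℝ => M :=
  fun _ _ => continuous_const

lemma CE.mcomm {P Q : Loop n} (hP : CE P) (hQ : CE Q) : CE fun x => mcomm (P x) (Q x) := by
  simpa [_root_.mcomm] using (hP.mul hQ).sub (hQ.mul hP)

lemma CE.killing {P Q : Loop n} (hP : CE P) (hQ : CE Q) :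
    Continuous fun x => killing n (P x) (Q x) := by
  have h : Continuous fun x => (P x * Q x).trace := by
    simp only [Matrix.trace, Matrix.diag, Matrix.mul_apply]
    exact continuous_finset_sum _ fun i _ =>
      continuous_finset_sum _ fun j _ => (hP i j).mul (hQ j i)
  simpa [_root_.killing] using continuous_const.fun_mul h

def MDerivAt (V : Loop n) (D : Matrix (Fin (n + 1)) (Fin (n + 1)) ℝ) (x : ℝ) : Prop :=
  ∀ i j, HasDerivAt (fun y => V y i j) (D i j) x

lemma IsLoop.mderivAt {V : Loop n} (h : IsLoop V) (x : ℝ) :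
    MDerivAt V (lderiv V x) x := fun i j => by
  have := ((h.1 i j).differentiable (by simp)).differentiableAt (x := x)
  simpa [lderiv] using this.hasDerivAt

lemma MDerivAt.mul {V W : Loop n} {DV DW} {x : ℝ}
    (hV : MDerivAt V DV x) (hW : MDerivAt W DW x) :
    MDerivAt (fun y => V y * W y) (DV * W x + V x * DW) x := fun i j => by
  have h : HasDerivAt (fun y => ∑ k, V y i k * W y k j)
      (∑ k, (DV i k * W x k j + V x i k * DW k j)) x :=
    HasDerivAt.fun_sum fun k _ => (hV i k).mul (hW k j)
  simpa [Matrix.mul_apply, Matrix.add_apply, Finset.sum_add_distrib] using h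

lemma MDerivAt.sub {V W : Loop n} {DV DW} {x : ℝ}
    (hV : MDerivAt V DV x) (hW : MDerivAt W DW x) :
    MDerivAt (fun y => V y - W y) (DV - DW) x := fun i j => by
  simpa [Matrix.sub_apply] using (hV i j).fun_sub (hW i j)

lemma MDerivAt.trace {V : Loop n} {DV} {x : ℝ} (hV : MDerivAt V DV x) :
    HasDerivAt (fun y => (V y).trace) DV.trace x := by
  have h : HasDerivAt (fun y => ∑ i, V y i i) (∑ i, DV i i) x :=
    HasDerivAt.fun_sum fun i _ => hV i i
  simpa [Matrix.trace, Matrix.diag] using h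

lemma MDerivAt.lderiv_eq {V : Loop n} {DV} {x : ℝ} (hV : MDerivAt V DV x) :
    lderiv V x = DV := by
  ext i j
  simpa [lderiv] using (hV i j).deriv

lemma IsLoop.ce {V : Loop n} (h : IsLoop V) : CE V := fun i j => (h.1 i j).continuous

lemma IsLoop.ce_lderiv {V : Loop n} (h : IsLoop V) : CE (lderiv V) := fun i j => by
  simpa [lderiv] using (h.1 i j).continuous_deriv (by simp)

lemma lderiv_mcomm {V W : Loop n} (hV : IsLoop V) (hW : IsLoop W) (x : ℝ) :
    lderiv (fun y => mcomm (V y) (W y)) x =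
      (lderiv V x * W x + V x * lderiv W x) - (lderiv W x * V x + W x * lderiv V x) := by
  have h := ((hV.mderivAt x).mul (hW.mderivAt x)).sub ((hW.mderivAt x).mul (hV.mderivAt x))
  exact MDerivAt.lderiv_eq (V := fun y => mcomm (V y) (W y)) h

/-- on the loop space of `sl(n+1)`, the Poisson tensors
`(P₀)_S V = [A, V]` (with `A` the constant lowest-weight root vector) and
`(P₁)_S V = V_x + [V,S]` are compatible: for every `λ`, the pencil
`(P_λ)_S V = V_x + [V, S + λA]` defines a Poisson tensor, i.e. the associated
bracket satisfies the Jacobi identity; on the linear functionals `ℓ_V, ℓ_W, ℓ_Z`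
the cyclic sum of iterated pencil brackets vanishes at every point `S`. -/
theorem loop_pencil_jacobi (n : ℕ)
    (A : Matrix (Fin (n + 1)) (Fin (n + 1)) ℝ)
    (hA : A = Matrix.of fun i j : Fin (n + 1) =>
      if i = Fin.last n ∧ j = 0 then (1 : ℝ) else 0)
    (lam : ℝ) (S V W Z : Loop n)
    (hS : IsLoop S) (hV : IsLoop V) (hW : IsLoop W) (hZ : IsLoop Z) :
    pencilBracket n lam A S V (fun x => mcomm (W x) (Z x))
      + pencilBracket n lam A S W (fun x => mcomm (Z x) (V x))
      + pencilBracket n lam A S Z (fun x => mcomm (V x) (W x)) = 0 := by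
  simp only [pencilBracket, lderiv_mcomm hW hZ, lderiv_mcomm hZ hV, lderiv_mcomm hV hW]
  have ceP : CE fun x => S x + lam • A := hS.ce.add (CE.const _)
  have hf1 : IntervalIntegrable
      (fun x => killing n (S x + lam • A) (mcomm (V x) (mcomm (W x) (Z x)))) MeasureTheory.volume 0 1 :=
    (ceP.killing (hV.ce.mcomm (hW.ce.mcomm hZ.ce))).intervalIntegrable 0 1
  have hf2 : IntervalIntegrable
      (fun x => killing n (S x + lam • A) (mcomm (W x) (mcomm (Z x) (V x)))) MeasureTheory.volume 0 1 :=
    (ceP.killing (hW.ce.mcomm (hZ.ce.mcomm hV.ce))).intervalIntegrable 0 1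
  have hf3 : IntervalIntegrable
      (fun x => killing n (S x + lam • A) (mcomm (Z x) (mcomm (V x) (W x)))) MeasureTheory.volume 0 1 :=
    (ceP.killing (hZ.ce.mcomm (hV.ce.mcomm hW.ce))).intervalIntegrable 0 1
  have hc1 : IntervalIntegrable
      (fun x => killing n (V x) (lderiv W x * Z x + W x * lderiv Z x - (lderiv Z x * W x + Z x * lderiv W x)))
      MeasureTheory.volume 0 1 :=
    (hV.ce.killing (((hW.ce_lderiv.mul hZ.ce).add (hW.ce.mul hZ.ce_lderiv)).sub
      ((hZ.ce_lderiv.mul hW.ce).add (hZ.ce.mul hW.ce_lderiv)))).intervalIntegrable 0 1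
  have hc2 : IntervalIntegrable
      (fun x => killing n (W x) (lderiv Z x * V x + Z x * lderiv V x - (lderiv V x * Z x + V x * lderiv Z x)))
      MeasureTheory.volume 0 1 :=
    (hW.ce.killing (((hZ.ce_lderiv.mul hV.ce).add (hZ.ce.mul hV.ce_lderiv)).sub
      ((hV.ce_lderiv.mul hZ.ce).add (hV.ce.mul hZ.ce_lderiv)))).intervalIntegrable 0 1
  have hc3 : IntervalIntegrable
      (fun x => killing n (Z x) (lderiv V x * W x + V x * lderiv W x - (lderiv W x * V x + W x * lderiv V x)))
      MeasureTheory.volume 0 1 :=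
    (hZ.ce.killing (((hV.ce_lderiv.mul hW.ce).add (hV.ce.mul hW.ce_lderiv)).sub
      ((hW.ce_lderiv.mul hV.ce).add (hW.ce.mul hV.ce_lderiv)))).intervalIntegrable 0 1
  rw [← intervalIntegral.integral_add hf1 hc1, ← intervalIntegral.integral_add hf2 hc2,
    ← intervalIntegral.integral_add hf3 hc3,
    ← intervalIntegral.integral_add (hf1.add hc1) (hf2.add hc2),
    ← intervalIntegral.integral_add ((hf1.add hc1).add (hf2.add hc2)) (hf3.add hc3)]
  have hgint : IntervalIntegrable (fun x =>
      killing n (S x + lam • A) (mcomm (V x) (mcomm (W x) (Z x))) +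
            killing n (V x) (lderiv W x * Z x + W x * lderiv Z x - (lderiv Z x * W x + Z x * lderiv W x)) +
          (killing n (S x + lam • A) (mcomm (W x) (mcomm (Z x) (V x))) +
            killing n (W x) (lderiv Z x * V x + Z x * lderiv V x - (lderiv V x * Z x + V x * lderiv Z x))) +
        (killing n (S x + lam • A) (mcomm (Z x) (mcomm (V x) (W x))) +
          killing n (Z x) (lderiv V x * W x + V x * lderiv W x - (lderiv W x * V x + W x * lderiv V x))))
      MeasureTheory.volume 0 1 := ((hf1.add hc1).add (hf2.add hc2)).add (hf3.add hc3)
  have hder : ∀ t ∈ Set.uIcc (0:ℝ) 1, HasDerivAt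
      (fun y => (2:ℝ) * (n + 1) * (2 * ((V y * W y * Z y).trace - (V y * Z y * W y).trace)))
      (killing n (S t + lam • A) (mcomm (V t) (mcomm (W t) (Z t))) +
            killing n (V t) (lderiv W t * Z t + W t * lderiv Z t - (lderiv Z t * W t + Z t * lderiv W t)) +
          (killing n (S t + lam • A) (mcomm (W t) (mcomm (Z t) (V t))) +
            killing n (W t) (lderiv Z t * V t + Z t * lderiv V t - (lderiv V t * Z t + V t * lderiv Z t))) +
        (killing n (S t + lam • A) (mcomm (Z t) (mcomm (V t) (W t))) +
          killing n (Z t) (lderiv V t * W t + V t * lderiv W t - (lderiv W t * V t + W t * lderiv V t)))) t := by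
    intro t _
    have mV := hV.mderivAt t
    have mW := hW.mderivAt t
    have mZ := hZ.mderivAt t
    have h1 : HasDerivAt (fun y => (V y * W y * Z y).trace)
        (((lderiv V t * W t + V t * lderiv W t) * Z t + V t * W t * lderiv Z t).trace) t :=
      ((mV.mul mW).mul mZ).trace
    have h2 : HasDerivAt (fun y => (V y * Z y * W y).trace)
        (((lderiv V t * Z t + V t * lderiv Z t) * W t + V t * Z t * lderiv W t).trace) t :=
      ((mV.mul mZ).mul mW).trace
    have hF := HasDerivAt.const_mul ((2:ℝ) * (n + 1))
      (HasDerivAt.const_mul (2:ℝ) (h1.sub h2))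
    have key : killing n (S t + lam • A) (mcomm (V t) (mcomm (W t) (Z t))) +
            killing n (V t) (lderiv W t * Z t + W t * lderiv Z t - (lderiv Z t * W t + Z t * lderiv W t)) +
          (killing n (S t + lam • A) (mcomm (W t) (mcomm (Z t) (V t))) +
            killing n (W t) (lderiv Z t * V t + Z t * lderiv V t - (lderiv V t * Z t + V t * lderiv Z t))) +
        (killing n (S t + lam • A) (mcomm (Z t) (mcomm (V t) (W t))) +
          killing n (Z t) (lderiv V t * W t + V t * lderiv W t - (lderiv W t * V t + W t * lderiv V t)))
        = (2:ℝ) * (n + 1) * (2 *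
            ((((lderiv V t * W t + V t * lderiv W t) * Z t + V t * W t * lderiv Z t).trace) -
             (((lderiv V t * Z t + V t * lderiv Z t) * W t + V t * Z t * lderiv W t).trace))) := by
      set P : Matrix (Fin (n+1)) (Fin (n+1)) ℝ := S t + lam • A with hPd
      have h0 : mcomm (V t) (mcomm (W t) (Z t)) + mcomm (W t) (mcomm (Z t) (V t)) +
          mcomm (Z t) (mcomm (V t) (W t)) = 0 := by
        simp only [mcomm]; noncomm_ring
      have hsum : P * mcomm (V t) (mcomm (W t) (Z t)) + P * mcomm (W t) (mcomm (Z t) (V t)) +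
          P * mcomm (Z t) (mcomm (V t) (W t)) = 0 := by
        rw [← mul_add, ← mul_add, h0, mul_zero]
      have jac := congrArg Matrix.trace hsum
      simp only [Matrix.trace_add, Matrix.trace_zero] at jac
      have e1 := Matrix.trace_mul_cycle (W t) (lderiv Z t) (V t)
      have e2 := (Matrix.trace_mul_cycle (W t) (V t) (lderiv Z t)).trans
        (Matrix.trace_mul_cycle (lderiv Z t) (W t) (V t))
      have e3 := Matrix.trace_mul_cycle (W t) (Z t) (lderiv V t)
      have e4 := (Matrix.trace_mul_cycle (W t) (lderiv V t) (Z t)).trans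
        (Matrix.trace_mul_cycle (Z t) (W t) (lderiv V t))
      have e5 := (Matrix.trace_mul_cycle (Z t) (lderiv V t) (W t)).trans
        (Matrix.trace_mul_cycle (W t) (Z t) (lderiv V t))
      have e6 := Matrix.trace_mul_cycle (Z t) (W t) (lderiv V t)
      have e7 := (Matrix.trace_mul_cycle (Z t) (V t) (lderiv W t)).trans
        (Matrix.trace_mul_cycle (lderiv W t) (Z t) (V t))
      have e8 := Matrix.trace_mul_cycle (Z t) (lderiv W t) (V t)
      simp only [killing, mul_add, add_mul, mul_sub, sub_mul, Matrix.trace_add,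
        Matrix.trace_sub, ← mul_assoc]
      linear_combination ((2:ℝ) * (n + 1)) * jac +
        ((2:ℝ) * (n + 1)) * (e1 - e2 + e3 - e4 + e5 - e6 + e7 - e8)
    rw [key]
    exact hF
  rw [intervalIntegral.integral_eq_sub_of_hasDerivAt hder hgint]
  have pV : V 1 = V 0 := Matrix.ext fun i j => by simpa using hV.2.1 i j 0
  have pW : W 1 = W 0 := Matrix.ext fun i j => by simpa using hW.2.1 i j 0
  have pZ : Z 1 = Z 0 := Matrix.ext fun i j => by simpa using hZ.2.1 i j 0
  simp [pV, pW, pZ]
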